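/- For all integers N, B and every natural number d, one has (over ℚ): (-2)^d · Σ_{u=0}^{d} 2^{-u} · C(N, u) · C(B, d-u) = 2^d · P^{a,b}_d(0), where a = -N - B - 1 and b = B - d. -/

import Mathlib

/-- Generalized binomial coefficient `C(x,n) = x(x-1)⋯(x-n+1)/n!` over `ℚ`. -/
def qchoose (x : ℚ) (n : ℕ) : ℚ :=
  (∏ i ∈ Finset.range n, (x - i)) / (n.factorial : ℚ)

/-- Constant term of the Jacobi polynomial:
`P^{a,b}_d(0) = 2^{-d} Σ_{v=0}^{d} C(d+a,v) C(d+b,d-v) (-1)^{d-v}`. -/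
def jacobiZero (a b : ℚ) (d : ℕ) : ℚ :=
  (1 / 2 : ℚ) ^ d *
    ∑ v ∈ Finset.range (d + 1),
      qchoose ((d : ℚ) + a) v * qchoose ((d : ℚ) + b) (d - v) * (-1 : ℚ) ^ (d - v)

/-!
Rewriting `C(d + a, v)` by upper negation and reflecting `v ↦ d - v` turns `2^d P^{a,b}_d(0)` into
`(-1)^d Σ_j C(B, j) C(N + B - j, d - j)`, and `(-2)^d` times the left side is
`(-1)^d Σ_u 2^(d-u) C(N, u) C(B, d - u)`. Expanding `2^(d-u) C(B, d-u)` by trinomial revision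
(`Σ_j C(d-u, j) = 2^(d-u)`) and `C(N + B - j, d - j)` by Chu–Vandermonde writes both of these
sums as the same sum of `C(N, u) C(B, j) C(B - j, d - u - j)` over `u + j ≤ d`.
-/

open Finset

namespace Ring

variable {R : Type*}

theorem choose_neg_eq_neg_one_pow_mul [CommRing R] [BinomialRing R] (r : R) (n : ℕ) :
    choose (-r) n = (-1) ^ n * choose (r + n - 1) n := by
  rw [choose_neg, Units.smul_def, Int.coe_negOnePow_natCast, zsmul_eq_mul]
  push_cast
  rfl

theorem sum_range_choose_mul_choose_sub [Ring R] [BinomialRing R] (r : R) (n : ℕ) :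
    ∑ j ∈ range (n + 1), choose r j * choose (r - j) (n - j) = 2 ^ n * choose r n :=
  calc ∑ j ∈ range (n + 1), choose r j * choose (r - j) (n - j)
      = ∑ j ∈ range (n + 1), n.choose j • choose r n :=
        sum_congr rfl fun j hj =>
          (choose_smul_choose r (Nat.lt_succ_iff.mp (mem_range.mp hj))).symm
    _ = 2 ^ n * choose r n := by
        rw [← sum_smul, Nat.sum_range_choose, nsmul_eq_mul, Nat.cast_pow, Nat.cast_ofNat]

variable [CommRing R] [BinomialRing R]

theorem sum_range_two_pow_mul_choose_mul_choose (r s : R) (d : ℕ) :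
    ∑ u ∈ range (d + 1), 2 ^ (d - u) * choose r u * choose s (d - u)
      = ∑ j ∈ range (d + 1), choose s j * choose (r + s - j) (d - j) := by
  have expand_two_pow (u : ℕ) (hu : u ∈ range (d + 1)) :
      2 ^ (d - u) * choose r u * choose s (d - u)
      = ∑ j ∈ range (d + 1 - u), choose r u * (choose s j * choose (s - j) (d - u - j)) := by
    rw [mul_right_comm, ← sum_range_choose_mul_choose_sub, mul_comm, mul_sum,
      show d - u + 1 = d + 1 - u by have := mem_range.mp hu; omega]
  have vandermonde (j : ℕ) (hj : j ∈ range (d + 1)) : choose s j * choose (r + s - j) (d - j)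
      = ∑ u ∈ range (d + 1 - j), choose r u * (choose s j * choose (s - j) (d - u - j)) := by
    rw [add_sub_assoc, add_choose_eq _ (Commute.all _ _),
      Nat.sum_antidiagonal_eq_sum_range_succ (fun a b => choose r a * choose (s - j) b), mul_sum,
      show (d - j).succ = d + 1 - j by have := mem_range.mp hj; omega]
    refine sum_congr rfl fun u _ => ?_
    rw [Nat.sub_right_comm]
    ring
  rw [sum_congr rfl expand_two_pow, sum_congr rfl vandermonde]
  exact sum_comm' fun u j => by simp only [mem_range]; omega

theorem sum_range_choose_sub_mul_choose_mul_neg_one_pow (r s : R) (d : ℕ) :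
    ∑ v ∈ range (d + 1), choose ((d : R) - (r + s + 1)) v * choose s (d - v) * (-1) ^ (d - v)
      = (-1) ^ d * ∑ j ∈ range (d + 1), choose s j * choose (r + s - j) (d - j) := by
  rw [mul_sum, ← sum_range_reflect _ (d + 1)]
  refine sum_congr rfl fun v hv => ?_
  have hvd : v ≤ d := Nat.lt_succ_iff.mp (mem_range.mp hv)
  rw [show d + 1 - 1 - v = d - v by omega, Nat.sub_sub_self hvd,
    ← neg_sub (r + s + 1), choose_neg_eq_neg_one_pow_mul,
    show r + s + 1 - d + ((d - v : ℕ) : R) - 1 = r + s - v by rw [Nat.cast_sub hvd]; ring,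
    show (-1 : R) ^ d = (-1) ^ (d - v) * (-1) ^ v by rw [← pow_add, Nat.sub_add_cancel hvd]]
  ring

end Ring

theorem qchoose_eq_choose (x : ℚ) (n : ℕ) : qchoose x n = Ring.choose x n := by
  rw [Ring.choose_eq_smul, ← Polynomial.aeval_eq_smeval, Polynomial.aeval_def,
    ← Polynomial.eval_map, descPochhammer_map, descPochhammer_eval_eq_prod_range, qchoose,
    smul_eq_mul, div_eq_inv_mul]

theorem combinatorial_sum_jacobi (N B : ℤ) (d : ℕ) :
    (-2 : ℚ) ^ d *
        ∑ u ∈ Finset.range (d + 1),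
          (1 / 2 : ℚ) ^ u * qchoose (N : ℚ) u * qchoose (B : ℚ) (d - u)
      = 2 ^ d * jacobiZero (-(N : ℚ) - (B : ℚ) - 1) ((B : ℚ) - (d : ℚ)) d := by
  have halve (u : ℕ) (hu : u ∈ range (d + 1)) :
      (-2 : ℚ) ^ d * ((1 / 2) ^ u * Ring.choose (N : ℚ) u * Ring.choose (B : ℚ) (d - u))
        = (-1) ^ d * (2 ^ (d - u) * Ring.choose (N : ℚ) u * Ring.choose (B : ℚ) (d - u)) := by
    rw [pow_sub₀ _ two_ne_zero (Nat.lt_succ_iff.mp (mem_range.mp hu)), neg_pow, one_div, inv_pow]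
    ring
  have ha : (d : ℚ) + (-N - B - 1) = d - (N + B + 1) := by ring
  have hb : (d : ℚ) + (B - d) = B := by ring
  simp only [jacobiZero, ha, hb, qchoose_eq_choose]
  rw [mul_sum, sum_congr rfl halve, ← mul_sum, ← mul_assoc, ← mul_pow,
    mul_one_div_cancel two_ne_zero, one_pow, one_mul,
    Ring.sum_range_choose_sub_mul_choose_mul_neg_one_pow,
    Ring.sum_range_two_pow_mul_choose_mul_choose]
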